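/- Let λ be a Young diagram, p ∈ (0,1), and let X = (X_{i,j})_{(i,j)∈λ} be i.i.d. Geometric(p) random variables. Let R and B be bijections from the set of tableaux of shape λ with entries in ℤ≥0 onto the set of interlacing tableaux of shape λ with entries in ℤ≥0 such that, for every tableau x, R(x) satisfies the RSK relations with respect to x and B(x) satisfies the Burge relations with respect to x. Then R(X) and B(X) have the same distribution. -/

import Mathlib

/-- Two lattice points are adjacent (ℓ¹-distance 1). -/
def AdjStep (p q : ℕ × ℕ) : Prop :=
  ((p.1 : ℤ) - q.1).natAbs + ((p.2 : ℤ) - q.2).natAbs = 1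

/-- `π` is a directed lattice path from `(a,b)` to `(c,d)`:
a sequence of minimal length `|c-a|+|d-b|` of adjacent lattice points. -/
def IsDirPath (a b c d : ℕ) (π : List (ℕ × ℕ)) : Prop :=
  π.length = ((c : ℤ) - a).natAbs + ((d : ℤ) - b).natAbs + 1 ∧
  π.head? = some (a, b) ∧ π.getLast? = some (c, d) ∧
  π.Chain' AdjStep

/-- A family in `Π^{(k)}_{m,n}`: `k` pairwise disjoint directed lattice paths,
the `i`-th from `(1,i)` to `(m, n-k+i)` (`1 ≤ i ≤ k`). -/
def NIPathFamily (m n k : ℕ) (π : Fin k → List (ℕ × ℕ)) : Prop :=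
  (∀ i : Fin k, IsDirPath 1 (i.1 + 1) m (n - k + (i.1 + 1)) (π i)) ∧
  ∀ i j : Fin k, i ≠ j → ∀ p ∈ π i, p ∉ π j

/-- A family in `Π*^{(k)}_{m,n}`: `k` pairwise disjoint directed lattice paths,
the `i`-th from `(m,i)` to `(1, n-k+i)` (`1 ≤ i ≤ k`). -/
def NIPathFamilyDual (m n k : ℕ) (π : Fin k → List (ℕ × ℕ)) : Prop :=
  (∀ i : Fin k, IsDirPath m (i.1 + 1) 1 (n - k + (i.1 + 1)) (π i)) ∧
  ∀ i j : Fin k, i ≠ j → ∀ p ∈ π i, p ∉ π j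

/-- `max_{π ∈ Π^{(k)}_{m,n}} Σ_{(i,j)∈π} x_{i,j}`. -/
noncomputable def maxFlow {α : Type*} [AddCommMonoid α] [SupSet α]
    (x : ℕ × ℕ → α) (m n k : ℕ) : α :=
  sSup {v | ∃ π : Fin k → List (ℕ × ℕ), NIPathFamily m n k π ∧
    v = ∑ i : Fin k, ((π i).map x).sum}

/-- `max_{π ∈ Π*^{(k)}_{m,n}} Σ_{(i,j)∈π} x_{i,j}`. -/
noncomputable def maxFlowDual {α : Type*} [AddCommMonoid α] [SupSet α]
    (x : ℕ × ℕ → α) (m n k : ℕ) : α :=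
  sSup {v | ∃ π : Fin k → List (ℕ × ℕ), NIPathFamilyDual m n k π ∧
    v = ∑ i : Fin k, ((π i).map x).sum}

/-- A (finite) Young diagram: boxes have coordinates ≥ 1 and the set is
downward closed: with each box it contains the whole rectangle `[1,i]×[1,j]`. -/
def IsYoungDiagram (lam : Finset (ℕ × ℕ)) : Prop :=
  ∀ p ∈ lam, 1 ≤ p.1 ∧ 1 ≤ p.2 ∧ ∀ q ∈ Finset.Icc (1, 1) p, q ∈ lam

/-- `r` satisfies the RSK relations with respect to `x` on the Young diagram `λ`:
for every border box `(m,n)` and `1 ≤ k ≤ min m n`,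
`Σ_{i=1}^k r_{m-i+1,n-i+1} = max_{π ∈ Π^{(k)}_{m,n}} Σ_{(i,j)∈π} x_{i,j}`. -/
def SatisfiesRSKRel {α : Type*} [AddCommMonoid α] [SupSet α]
    (lam : Finset (ℕ × ℕ)) (x r : ℕ × ℕ → α) : Prop :=
  ∀ m n : ℕ, (m, n) ∈ lam → (m + 1, n + 1) ∉ lam →
    ∀ k : ℕ, 1 ≤ k → k ≤ min m n →
      ∑ i ∈ Finset.range k, r (m - i, n - i) = maxFlow x m n k

/-- `b` satisfies the Burge relations with respect to `x` on the Young diagram `λ`. -/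
def SatisfiesBurgeRel {α : Type*} [AddCommMonoid α] [SupSet α]
    (lam : Finset (ℕ × ℕ)) (x b : ℕ × ℕ → α) : Prop :=
  ∀ m n : ℕ, (m, n) ∈ lam → (m + 1, n + 1) ∉ lam →
    ∀ k : ℕ, 1 ≤ k → k ≤ min m n →
      ∑ i ∈ Finset.range k, b (m - i, n - i) = maxFlowDual x m n k

/-- A tableau (encoded as a function on `ℕ×ℕ` vanishing off `λ`) is interlacing if its
entries weakly increase along rows and columns of `λ`. -/
def IsInterlacing {α : Type*} [Preorder α] (lam : Finset (ℕ × ℕ)) (f : ℕ × ℕ → α) : Prop :=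
  ∀ p ∈ lam, (1 < p.1 → f (p.1 - 1, p.2) ≤ f p) ∧ (1 < p.2 → f (p.1, p.2 - 1) ≤ f p)

open MeasureTheory ProbabilityTheory

/-!
For an interlacing tableau `t`, `P(R(X) = t) = P(X = R⁻¹ t) = p ^ |λ| (1 - p) ^ |R⁻¹ t|`, where
`|x|` is the total of the entries, so it suffices that `R⁻¹ t` and `B⁻¹ t` have the same total.
Taking `k = min m n` in the RSK and Burge relations at a border box `(m, n)`, the `k` disjoint
paths are forced to cover the rectangle `[1,m] × [1,n]`; so both relations say that the rectangle
sum of the input at `(m, n)` is the sum of `t` along the diagonal ending at `(m, n)`. The total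
of a tableau is an alternating sum of its rectangle sums at the corners of `λ`, which are all
border boxes.
-/

theorem length_ge_dist_add_one_of_isChain_adjStep :
    ∀ {π : List (ℕ × ℕ)}, π.IsChain AdjStep → ∀ {p q : ℕ × ℕ}, π.head? = some p →
      π.getLast? = some q → ((q.1 : ℤ) - p.1).natAbs + ((q.2 : ℤ) - p.2).natAbs + 1 ≤ π.length
  | [], _, _, _, hp, _ => by simp at hp
  | [a], _, _, _, hp, hq => by simp_all
  | a :: b :: π, hch, p, q, hp, hq => by
    rw [List.isChain_cons_cons] at hch
    have hrest := length_ge_dist_add_one_of_isChain_adjStep hch.2 (p := b) rfl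
      (by rwa [List.getLast?_cons_cons] at hq)
    have hab := hch.1
    simp only [Option.some.injEq, List.head?_cons] at hp
    subst hp
    unfold AdjStep at hab
    simp only [List.length_cons] at hrest ⊢
    omega

/-- Along a directed path the ℓ¹-distance to the endpoint drops by one at each step. -/
theorem IsDirPath.nodup_and_mem_box :
    ∀ {a b c d : ℕ} {π : List (ℕ × ℕ)}, IsDirPath a b c d π →
      π.Nodup ∧ ∀ q ∈ π, min a c ≤ q.1 ∧ q.1 ≤ max a c ∧ min b d ≤ q.2 ∧ q.2 ≤ max b d
  | _, _, _, _, [], ⟨_, hhead, _, _⟩ => by simp at hhead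
  | a, b, c, d, [e], ⟨_, hhead, hlast, _⟩ => by
    simp only [List.head?_cons, List.getLast?_singleton, Option.some.injEq] at hhead hlast
    subst hhead
    simp only [Prod.mk.injEq] at hlast
    simp [hlast.1, hlast.2]
  | a, b, c, d, e :: f :: π, ⟨hlen, hhead, hlast, hch⟩ => by
    simp only [List.head?_cons, Option.some.injEq] at hhead
    subst hhead
    rw [List.getLast?_cons_cons] at hlast
    replace hch : List.IsChain AdjStep _ := hch
    rw [List.isChain_cons_cons] at hch
    have hdist := length_ge_dist_add_one_of_isChain_adjStep hch.2 (p := f) rfl hlast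
    have hef := hch.1
    unfold AdjStep at hef
    simp only [List.length_cons] at hlen hdist
    obtain ⟨hnodup, hbox⟩ := IsDirPath.nodup_and_mem_box (a := f.1) (b := f.2) (c := c) (d := d)
      (π := f :: π) ⟨by simp only [List.length_cons]; omega, rfl, hlast, hch.2⟩
    refine ⟨List.nodup_cons.mpr ⟨fun he => ?_, hnodup⟩, ?_⟩
    · have := hbox _ he
      omega
    · rintro q (_ | ⟨_, hq⟩)
      · omega
      · have := hbox q hq
        omega

theorem isDirPath_map_range {a b c d L : ℕ} (f : ℕ → ℕ × ℕ)
    (hL : L = ((c : ℤ) - a).natAbs + ((d : ℤ) - b).natAbs + 1)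
    (hfirst : f 0 = (a, b)) (hlast : f (L - 1) = (c, d))
    (hadj : ∀ s, s + 1 < L → AdjStep (f s) (f (s + 1))) :
    IsDirPath a b c d ((List.range L).map f) := by
  obtain ⟨L, rfl⟩ : ∃ L', L = L' + 1 := ⟨L - 1, by omega⟩
  refine ⟨by simp [hL], ?_, ?_, ?_⟩
  · simp [List.range_succ_eq_map, hfirst]
  · simpa [List.getLast?_map, List.getLast?_range] using hlast
  · change List.IsChain _ _
    rw [List.isChain_map, List.isChain_range_succ]
    exact fun s hs => hadj s (by omega)

theorem sum_sum_map_eq_sum_of_pairwise_disjoint {ι α M : Type*} [Fintype ι] [DecidableEq α]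
    [AddCommMonoid M] (π : ι → List α) (S : Finset α) (hnodup : ∀ i, (π i).Nodup)
    (hsub : ∀ i, ∀ q ∈ π i, q ∈ S) (hdisj : ∀ i j, i ≠ j → ∀ q ∈ π i, q ∉ π j)
    (hlen : ∑ i, (π i).length = S.card) (x : α → M) :
    ∑ i, ((π i).map x).sum = ∑ q ∈ S, x q := by
  have hdisj' : (Set.univ : Set ι).PairwiseDisjoint fun i => (π i).toFinset :=
    fun i _ j _ hij => Finset.disjoint_left.mpr fun q hi hj =>
      hdisj i j hij q (List.mem_toFinset.mp hi) (List.mem_toFinset.mp hj)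
  have hcover : Finset.univ.biUnion (fun i => (π i).toFinset) = S := by
    refine Finset.eq_of_subset_of_card_le (fun q hq => ?_) ?_
    · obtain ⟨i, -, hq⟩ := Finset.mem_biUnion.mp hq
      exact hsub i q (List.mem_toFinset.mp hq)
    · rw [Finset.card_biUnion (fun i _ j _ hij => hdisj' trivial trivial hij), ← hlen]
      simp [List.toFinset_card_of_nodup (hnodup _)]
  rw [← hcover, Finset.sum_biUnion (fun i _ j _ hij => hdisj' trivial trivial hij)]
  exact Finset.sum_congr rfl fun i _ => (List.sum_toFinset x (hnodup i)).symm

def rectSum {M : Type*} [AddCommMonoid M] (x : ℕ × ℕ → M) (c : ℕ × ℕ) : M :=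
  ∑ q ∈ Finset.Icc (1, 1) c, x q

/-- Covers `Π^{(k)}_{m,n}` (`a = 1`, `c = m`) and `Π*^{(k)}_{m,n}` (`a = m`, `c = 1`). For
`k = min m n` the `k` paths of length `m + n - k` have exactly `m * n` boxes in total. -/
theorem sum_eq_rectSum_of_disjoint_paths {M : Type*} [AddCommMonoid M] {a c m n k : ℕ}
    (hac : min a c = 1 ∧ max a c = m) (hk : k = min m n)
    (π : Fin k → List (ℕ × ℕ)) (hpath : ∀ i : Fin k, IsDirPath a (i + 1) c (n - k + (i + 1)) (π i))
    (hdisj : ∀ i j : Fin k, i ≠ j → ∀ q ∈ π i, q ∉ π j) (x : ℕ × ℕ → M) :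
    ∑ i, ((π i).map x).sum = rectSum x (m, n) := by
  classical
  refine sum_sum_map_eq_sum_of_pairwise_disjoint π _ (fun i => (hpath i).nodup_and_mem_box.1)
    (fun i q hq => ?_) hdisj ?_ x
  · have := (hpath i).nodup_and_mem_box.2 q hq
    have := i.2
    simp only [Finset.mem_Icc, Prod.le_def]
    omega
  · have hlen : ∀ i : Fin k, (π i).length = m + n - k := fun i => by
      have := (hpath i).1
      omega
    have harea : k * (m + n - k) = m * n := by
      rcases le_total m n with h | h
      · rw [hk, min_eq_left h, Nat.add_sub_cancel_left]
      · rw [hk, min_eq_right h, Nat.add_sub_cancel, Nat.mul_comm]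
    simpa [hlen, Finset.card_Icc_prod] using harea

/-- The `i`-th path (`0 ≤ i < k`) of a family in `Π^{(k)}_{m,n}`: down column `i + 1` to
row `m - i`, along that row to column `n - k + i + 1`, then down to row `m`. -/
def hookPath (m n k i : ℕ) (s : ℕ) : ℕ × ℕ :=
  if s < m - i then (1 + s, i + 1)
  else if s < m - i + (n - k) then (m - i, i + 2 + (s - (m - i)))
  else (m - i + 1 + (s - (m - i) - (n - k)), n - k + i + 1)

/-- `hookPath` reflected upside down in the rectangle, giving a family in `Π*^{(k)}_{m,n}`. -/
def hookPathDual (m n k i : ℕ) (s : ℕ) : ℕ × ℕ :=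
  if s < m - i then (m - s, i + 1)
  else if s < m - i + (n - k) then (i + 1, i + 2 + (s - (m - i)))
  else (i - (s - (m - i) - (n - k)), n - k + i + 1)

theorem nIPathFamily_hookPath {m n k : ℕ} (hkm : k ≤ m) (hkn : k ≤ n) :
    NIPathFamily m n k fun i => (List.range (m + n - k)).map (hookPath m n k i) := by
  refine ⟨fun i => isDirPath_map_range _ (by omega) ?_ ?_ fun s _ => ?_, ?_⟩
  · simp [hookPath, show 0 < m - i by omega]
  · unfold hookPath
    split_ifs <;> ext <;> simp <;> omega
  · unfold AdjStep hookPath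
    split_ifs <;> simp <;> omega
  · intro i j hij q hi hj
    have := Fin.val_ne_of_ne hij
    simp only [List.mem_map, List.mem_range] at hi hj
    obtain ⟨s, -, rfl⟩ := hi
    obtain ⟨t, -, hts⟩ := hj
    unfold hookPath at hts
    split_ifs at hts <;> simp only [Prod.mk.injEq] at hts <;> omega

theorem nIPathFamilyDual_hookPathDual {m n k : ℕ} (hkm : k ≤ m) (hkn : k ≤ n) :
    NIPathFamilyDual m n k fun i => (List.range (m + n - k)).map (hookPathDual m n k i) := by
  refine ⟨fun i => isDirPath_map_range _ (by omega) ?_ ?_ fun s _ => ?_, ?_⟩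
  · simp [hookPathDual, show 0 < m - i by omega]
  · unfold hookPathDual
    split_ifs <;> ext <;> simp <;> omega
  · unfold AdjStep hookPathDual
    split_ifs <;> simp <;> omega
  · intro i j hij q hi hj
    have := Fin.val_ne_of_ne hij
    simp only [List.mem_map, List.mem_range] at hi hj
    obtain ⟨s, -, rfl⟩ := hi
    obtain ⟨t, -, hts⟩ := hj
    unfold hookPathDual at hts
    split_ifs at hts <;> simp only [Prod.mk.injEq] at hts <;> omega

theorem maxFlow_min_eq_rectSum {M : Type*} [AddCommMonoid M] [ConditionallyCompleteLattice M]
    (x : ℕ × ℕ → M) {m n : ℕ} (hm : 1 ≤ m) :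
    maxFlow x m n (min m n) = rectSum x (m, n) := by
  have hcover :=
    sum_eq_rectSum_of_disjoint_paths (a := 1) (c := m) (m := m) (n := n) (by omega) rfl (x := x)
  rw [maxFlow, ← csSup_singleton (rectSum x (m, n))]
  congr 1
  ext v
  have h := nIPathFamily_hookPath (min_le_left m n) (min_le_right m n)
  exact ⟨fun ⟨π, hπ, hv⟩ => hv ▸ hcover π hπ.1 hπ.2,
    fun hv => ⟨_, h, (Set.mem_singleton_iff.mp hv).trans (hcover _ h.1 h.2).symm⟩⟩

theorem maxFlowDual_min_eq_rectSum {M : Type*} [AddCommMonoid M] [ConditionallyCompleteLattice M]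
    (x : ℕ × ℕ → M) {m n : ℕ} (hm : 1 ≤ m) :
    maxFlowDual x m n (min m n) = rectSum x (m, n) := by
  have hcover :=
    sum_eq_rectSum_of_disjoint_paths (a := m) (c := 1) (m := m) (n := n) (by omega) rfl (x := x)
  rw [maxFlowDual, ← csSup_singleton (rectSum x (m, n))]
  congr 1
  ext v
  have h := nIPathFamilyDual_hookPathDual (min_le_left m n) (min_le_right m n)
  exact ⟨fun ⟨π, hπ, hv⟩ => hv ▸ hcover π hπ.1 hπ.2,
    fun hv => ⟨_, h, (Set.mem_singleton_iff.mp hv).trans (hcover _ h.1 h.2).symm⟩⟩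

section Rectangles

variable {M : Type*} [AddCommMonoid M]

@[simp]
theorem rectSum_zero_fst (x : ℕ × ℕ → M) (n : ℕ) : rectSum x (0, n) = 0 := by
  simp [rectSum, Finset.Icc_prod_def]

@[simp]
theorem rectSum_zero_snd (x : ℕ × ℕ → M) (a : ℕ) : rectSum x (a, 0) = 0 := by
  simp [rectSum, Finset.Icc_prod_def]

theorem rectSum_succ_snd (x : ℕ × ℕ → M) (a n : ℕ) :
    rectSum x (a, n + 1) = rectSum x (a, n) + ∑ i ∈ Finset.Icc 1 a, x (i, n + 1) := by
  simp only [rectSum, Finset.Icc_prod_def, Finset.sum_product]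
  rw [← Finset.sum_add_distrib]
  exact Finset.sum_congr rfl fun i _ => Finset.sum_Icc_succ_top (by omega) _

/-- Telescoping over the columns `1, …, N` of a diagram with column heights `h`. -/
theorem sum_rectSum_add_rectSum (x : ℕ × ℕ → M) (h : ℕ → ℕ) (N : ℕ) :
    ∑ n ∈ Finset.range N, rectSum x (h (n + 1), n + 1) + rectSum x (h (N + 1), N) =
      ∑ n ∈ Finset.range N, ∑ i ∈ Finset.Icc 1 (h (n + 1)), x (i, n + 1) +
        ∑ n ∈ Finset.range N, rectSum x (h (n + 1 + 1), n + 1) := by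
  induction N with
  | zero => simp
  | succ N ih =>
    simp only [Finset.sum_range_succ]
    rw [rectSum_succ_snd, ← add_assoc, ih]
    abel

end Rectangles

def colHeight (lam : Finset (ℕ × ℕ)) (n : ℕ) : ℕ :=
  (lam.filter fun q => q.2 = n).sup Prod.fst

namespace IsYoungDiagram

variable {lam : Finset (ℕ × ℕ)}

theorem mem_iff_le_colHeight (hlam : IsYoungDiagram lam) {i n : ℕ} (hi : 1 ≤ i) :
    (i, n) ∈ lam ↔ i ≤ colHeight lam n := by
  refine ⟨fun h => Finset.le_sup (f := Prod.fst)
    (Finset.mem_filter.mpr ⟨h, rfl⟩ : (i, n) ∈ lam.filter fun q => q.2 = n), fun h => ?_⟩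
  obtain ⟨q, hq, hiq⟩ := (Finset.le_sup_iff (show (⊥ : ℕ) < i from hi)).mp h
  obtain ⟨hqlam, rfl⟩ := Finset.mem_filter.mp hq
  have := hlam q hqlam
  exact this.2.2 _ (Finset.mem_Icc.mpr ⟨⟨hi, this.2.1⟩, hiq, le_rfl⟩)

theorem colHeight_succ_le (hlam : IsYoungDiagram lam) {n : ℕ} (hn : 1 ≤ n) :
    colHeight lam (n + 1) ≤ colHeight lam n := by
  rcases Nat.eq_zero_or_pos (colHeight lam (n + 1)) with h | h
  · omega
  have hmem := (hlam.mem_iff_le_colHeight h).mpr le_rfl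
  refine (hlam.mem_iff_le_colHeight h).mp ((hlam _ hmem).2.2 _ ?_)
  simp only [Finset.mem_Icc, Prod.mk_le_mk]
  omega

theorem sum_eq_sum_range_colHeight (hlam : IsYoungDiagram lam) {M : Type*} [AddCommMonoid M]
    (x : ℕ × ℕ → M) {N : ℕ} (hN : ∀ q ∈ lam, q.2 ≤ N) :
    ∑ q ∈ lam, x q =
      ∑ n ∈ Finset.range N, ∑ i ∈ Finset.Icc 1 (colHeight lam (n + 1)), x (i, n + 1) := by
  rw [← Finset.sum_fiberwise_of_maps_to (g := fun q => q.2 - 1) (t := Finset.range N)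
    fun q hq => Finset.mem_range.mpr (by have := hN q hq; have := (hlam q hq).2.1; omega)]
  refine Finset.sum_congr rfl fun n _ => ?_
  have hcol : lam.filter (fun q => q.2 - 1 = n) =
      Finset.Icc 1 (colHeight lam (n + 1)) ×ˢ {n + 1} := by
    ext ⟨i, j⟩
    simp only [Finset.mem_filter, Finset.mem_product, Finset.mem_Icc, Finset.mem_singleton]
    constructor
    · rintro ⟨hij, rfl⟩
      obtain ⟨hi, hj, -⟩ := hlam _ hij
      rw [show j - 1 + 1 = j by omega]
      exact ⟨⟨hi, (hlam.mem_iff_le_colHeight hi).mp hij⟩, rfl⟩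
    · rintro ⟨⟨hi, hih⟩, rfl⟩
      exact ⟨(hlam.mem_iff_le_colHeight hi).mpr hih, rfl⟩
  rw [hcol, Finset.sum_product]
  simp

/-- Column by column, `Σ_λ x = Σ_n (rectSum x (h n, n) - rectSum x (h (n+1), n))` for the column
heights `h`, and all these corners are border boxes. -/
theorem sum_eq_of_rectSum_eq (hlam : IsYoungDiagram lam) {M : Type*} [AddCommMonoid M]
    [IsRightCancelAdd M] {x y : ℕ × ℕ → M}
    (hxy : ∀ m n, (m, n) ∈ lam → (m + 1, n + 1) ∉ lam → rectSum x (m, n) = rectSum y (m, n)) :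
    ∑ q ∈ lam, x q = ∑ q ∈ lam, y q := by
  obtain ⟨N, hN⟩ : ∃ N, ∀ q ∈ lam, q.2 ≤ N := ⟨lam.sup Prod.snd, fun q hq => Finset.le_sup hq⟩
  have hlast : colHeight lam (N + 1) = 0 := by
    by_contra hpos
    have := hN _ ((hlam.mem_iff_le_colHeight (Nat.pos_of_ne_zero hpos)).mpr le_rfl)
    omega
  have hborder : ∀ n a, colHeight lam (n + 1 + 1) ≤ a → a ≤ colHeight lam (n + 1) →
      rectSum x (a, n + 1) = rectSum y (a, n + 1) := by
    intro n a hlo hhi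
    rcases Nat.eq_zero_or_pos a with rfl | ha
    · simp
    refine hxy a (n + 1) ((hlam.mem_iff_le_colHeight ha).mpr hhi) fun hmem => ?_
    have := (hlam.mem_iff_le_colHeight (by omega)).mp hmem
    omega
  have hx := sum_rectSum_add_rectSum x (colHeight lam) N
  have hy := sum_rectSum_add_rectSum y (colHeight lam) N
  rw [hlast, rectSum_zero_fst, add_zero, ← hlam.sum_eq_sum_range_colHeight _ hN] at hx hy
  refine add_right_cancel
    (b := ∑ n ∈ Finset.range N, rectSum y (colHeight lam (n + 1 + 1), n + 1)) ?_
  calc ∑ q ∈ lam, x q + ∑ n ∈ Finset.range N, rectSum y (colHeight lam (n + 1 + 1), n + 1)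
      = ∑ q ∈ lam, x q + ∑ n ∈ Finset.range N, rectSum x (colHeight lam (n + 1 + 1), n + 1) := by
        congr 1
        exact Finset.sum_congr rfl fun n _ =>
          (hborder n _ le_rfl (hlam.colHeight_succ_le (by omega))).symm
    _ = ∑ n ∈ Finset.range N, rectSum x (colHeight lam (n + 1), n + 1) := hx.symm
    _ = ∑ n ∈ Finset.range N, rectSum y (colHeight lam (n + 1), n + 1) :=
        Finset.sum_congr rfl fun n _ =>
          hborder n _ (hlam.colHeight_succ_le (by omega)) le_rfl
    _ = _ := hy

end IsYoungDiagram

theorem sum_eq_of_satisfiesRSKRel_of_satisfiesBurgeRel {M : Type*} [AddCommMonoid M]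
    [ConditionallyCompleteLattice M] [IsRightCancelAdd M] {lam : Finset (ℕ × ℕ)}
    (hlam : IsYoungDiagram lam) {x y r : ℕ × ℕ → M} (hx : SatisfiesRSKRel lam x r)
    (hy : SatisfiesBurgeRel lam y r) :
    ∑ q ∈ lam, x q = ∑ q ∈ lam, y q :=
  hlam.sum_eq_of_rectSum_eq fun m n hmn hborder => by
    obtain ⟨hm, hn, -⟩ := hlam _ hmn
    rw [← maxFlow_min_eq_rectSum x hm, ← maxFlowDual_min_eq_rectSum y hm,
      ← hx m n hmn hborder _ (by omega) le_rfl, hy m n hmn hborder _ (by omega) le_rfl]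

theorem countable_tableaux (lam : Finset (ℕ × ℕ)) :
    Countable {f : ℕ × ℕ → ℕ // ∀ q ∉ lam, f q = 0} := by
  refine Function.Injective.countable (f := fun f (q : lam) => f.1 q) fun f g hfg => ?_
  ext q
  by_cases hq : q ∈ lam
  · exact congrFun hfg ⟨q, hq⟩
  · rw [f.2 q hq, g.2 q hq]

theorem MeasureTheory.Measure.map_equiv_eq_of_measure_symm_singleton {α β : Type*} [MeasurableSpace α]
    [MeasurableSpace β] [Countable α] [MeasurableSingletonClass α] [MeasurableSingletonClass β]
    (μ : Measure α) (R B : α ≃ β) (h : ∀ t, μ {R.symm t} = μ {B.symm t}) :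
    μ.map R = μ.map B := by
  have : Countable β := R.symm.injective.countable
  have hpre : ∀ (E : α ≃ β) t, E ⁻¹' {t} = {E.symm t} := fun E t => by
    ext; simp [Equiv.eq_symm_apply]
  refine Measure.ext_of_singleton fun t => ?_
  rw [Measure.map_apply (measurable_of_countable _) (measurableSet_singleton t),
    Measure.map_apply (measurable_of_countable _) (measurableSet_singleton t), hpre, hpre, h]

theorem measure_eq_of_iIndepFun_geometric {Ω : Type*} [MeasurableSpace Ω] {P : Measure Ω}
    {lam : Finset (ℕ × ℕ)} {p : unitInterval} (hp : p ≠ 0) {X : Ω → ℕ × ℕ → ℕ}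
    (hmeas : ∀ q, Measurable fun ω => X ω q) (hzero : ∀ ω, ∀ q ∉ lam, X ω q = 0)
    (hindep : iIndepFun (fun (q : lam) ω => X ω q) P)
    (hlaw : ∀ q ∈ lam, P.map (fun ω => X ω q) = geometricMeasure p)
    {x : ℕ × ℕ → ℕ} (hx : ∀ q ∉ lam, x q = 0) :
    P {ω | X ω = x} = ENNReal.ofReal ((1 - p) ^ (∑ q ∈ lam, x q) * p ^ lam.card) := by
  have hset : {ω | X ω = x} = ⋂ q ∈ (Finset.univ : Finset lam), (fun ω => X ω q) ⁻¹' {x q} := by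
    ext ω
    simp only [Set.mem_ofPred_eq, Finset.mem_univ, Set.iInter_true, Set.mem_iInter,
      Set.mem_preimage, Set.mem_singleton_iff]
    refine ⟨fun h q => h ▸ rfl, fun h => funext fun q => ?_⟩
    by_cases hq : q ∈ lam
    · exact h ⟨q, hq⟩
    · rw [hzero ω q hq, hx q hq]
  have hsingle : ∀ q ∈ lam, P ((fun ω => X ω q) ⁻¹' {x q}) = ENNReal.ofReal ((1 - p) ^ x q * p) :=
    fun q hq => by
      rw [← Measure.map_apply (hmeas q) (measurableSet_singleton _), hlaw q hq,
        geometricMeasure_singleton hp]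
  rw [hset, hindep.measure_inter_preimage_eq_mul _ fun _ _ => measurableSet_singleton _,
    Finset.prod_coe_sort lam fun q => P ((fun ω => X ω q) ⁻¹' {x q}),
    Finset.prod_congr rfl hsingle, ← ENNReal.ofReal_prod_of_nonneg fun q _ =>
      geometricMeasure_nonneg p (x q), Finset.prod_mul_distrib, Finset.prod_pow_eq_pow_sum,
    Finset.prod_const]

theorem RSK_X_eq_Burge_X_in_distribution_geometric_general
    (lam : Finset (ℕ × ℕ)) (hlam : IsYoungDiagram lam)
    (p : ℝ) (hp : 0 < p) (hp1 : p < 1)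
    {Ω : Type*} [MeasurableSpace Ω] (P : Measure Ω)
    (X : Ω → ℕ × ℕ → ℕ)
    (hmeas : ∀ q : ℕ × ℕ, Measurable fun ω => X ω q)
    (hzero : ∀ ω, ∀ q ∉ lam, X ω q = 0)
    (hindep : iIndepFun
      (fun (q : {q : ℕ × ℕ // q ∈ lam}) => fun ω => X ω q.1) P)
    (hlaw : ∀ q ∈ lam, Measure.map (fun ω => X ω q) P = geometricMeasure ⟨p, hp.le, hp1.le⟩)
    (R B : {f : ℕ × ℕ → ℕ // ∀ q ∉ lam, f q = 0} ≃
      {f : ℕ × ℕ → ℕ // (∀ q ∉ lam, f q = 0) ∧ IsInterlacing lam f})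
    (hR : ∀ x, SatisfiesRSKRel lam x.1 (R x).1)
    (hB : ∀ x, SatisfiesBurgeRel lam x.1 (B x).1) :
    Measure.map (fun ω => R ⟨X ω, fun q hq => hzero ω q hq⟩) P
      = Measure.map (fun ω => B ⟨X ω, fun q hq => hzero ω q hq⟩) P := by
  have := countable_tableaux lam
  let T : Ω → {f : ℕ × ℕ → ℕ // ∀ q ∉ lam, f q = 0} := fun ω => ⟨X ω, hzero ω⟩
  have hT : Measurable T := (measurable_pi_lambda _ hmeas).subtype_mk
  have hweight : ∀ x, P.map T {x} = ENNReal.ofReal ((1 - p) ^ (∑ q ∈ lam, x.1 q) * p ^ lam.card) :=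
    fun x => by
      rw [Measure.map_apply hT (measurableSet_singleton x), ← measure_eq_of_iIndepFun_geometric
        (p := ⟨p, hp.le, hp1.le⟩) (fun h => hp.ne' (congrArg Subtype.val h)) hmeas hzero hindep
        hlaw x.2]
      simp [T, Set.preimage, Subtype.ext_iff]
  calc P.map (R ∘ T) = (P.map T).map R := (Measure.map_map (measurable_of_countable R) hT).symm
    _ = (P.map T).map B := Measure.map_equiv_eq_of_measure_symm_singleton _ R B fun t => by
        rw [hweight, hweight, sum_eq_of_satisfiesRSKRel_of_satisfiesBurgeRel hlam (r := t.1)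
          (by simpa using hR (R.symm t)) (by simpa using hB (B.symm t))]
    _ = P.map (B ∘ T) := Measure.map_map (measurable_of_countable B) hT

/-- **Theorem (RSK(X) ≗ Bur(X), geometric case).** Let `X` be a random tableau of shape
`λ` with i.i.d. Geometric(p) entries, and let `R`, `B` be bijections from tableaux onto
interlacing tableaux (of shape `λ`, entries in `ℤ≥0`) satisfying respectively the RSK and
the Burge relations. Then `R(X)` and `B(X)` have the same distribution. -/
theorem RSK_X_eq_Burge_X_in_distribution_geometric
    (lam : Finset (ℕ × ℕ)) (hlam : IsYoungDiagram lam)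
    (p : ℝ) (hp : 0 < p) (hp1 : p < 1)
    {Ω : Type*} [MeasurableSpace Ω] (P : Measure Ω) [IsProbabilityMeasure P]
    (X : Ω → ℕ × ℕ → ℕ)
    (hmeas : ∀ q : ℕ × ℕ, Measurable fun ω => X ω q)
    (hzero : ∀ ω, ∀ q ∉ lam, X ω q = 0)
    (hindep : iIndepFun
      (fun (q : {q : ℕ × ℕ // q ∈ lam}) => fun ω => X ω q.1) P)
    (hlaw : ∀ q ∈ lam, Measure.map (fun ω => X ω q) P = geometricMeasure ⟨p, hp.le, hp1.le⟩)
    (R B : {f : ℕ × ℕ → ℕ // ∀ q ∉ lam, f q = 0} ≃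
      {f : ℕ × ℕ → ℕ // (∀ q ∉ lam, f q = 0) ∧ IsInterlacing lam f})
    (hR : ∀ x, SatisfiesRSKRel lam x.1 (R x).1)
    (hB : ∀ x, SatisfiesBurgeRel lam x.1 (B x).1) :
    Measure.map (fun ω => R ⟨X ω, fun q hq => hzero ω q hq⟩) P
      = Measure.map (fun ω => B ⟨X ω, fun q hq => hzero ω q hq⟩) P :=
  RSK_X_eq_Burge_X_in_distribution_geometric_general lam hlam p hp hp1 P X hmeas hzero hindep hlaw R
    B hR hB
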